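/- arXiv:2212.14171 — 7 statements merged into one kernel-verified Lean document; each statement's English description precedes it below -/
import Mathlib

section
/- There is a family G of subsets of ℕ×ℕ with |G| = 𝔡 and a ⊆*-decreasing sequence (cₖ)_{k<ω} of subsets of ℕ×ℕ such that each cₖ has infinite intersection with every member of G, but no c ⊆* cₖ for all k has infinite intersection with every member of G. Concretely: let F ⊆ ℕ^ℕ be a dominating family of size 𝔡, G = { b_f : f ∈ F } where b_f = {(i,n) : n > f(i)}, and cₖ = {(i,n) : i ≥ k}. -/
/-!
Take `F` to be a dominating family of minimal size `𝔡`; `f ↦ aboveGraph f` is injective, so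
the family `{aboveGraph f : f ∈ F}` also has size `𝔡`. Every column of `tailCol k` meets
`aboveGraph f`, so their intersection is infinite. If `c ⊆* tailCol k` for every `k`, then every
column of `c` is finite, so `c` lies below the graph of some `g`. A member `f ∈ F` dominating
`g` from `N` on leaves `c ∩ aboveGraph f` inside the finite set `c \ tailCol N`.
-/

open Set

/-- `a ⊆* b` for subsets of an arbitrary type. -/
def ASubG {α : Type*} (a b : Set α) : Prop := (a \ b).Finite

/-- `f ≤* g` : eventual domination. -/
def EvLE (f g : ℕ → ℕ) : Prop := ∀ᶠ n in Filter.atTop, f n ≤ g n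

/-- The dominating number 𝔡. -/
noncomputable def dNum : Cardinal :=
  sInf {c | ∃ D : Set (ℕ → ℕ), (∀ f : ℕ → ℕ, ∃ d ∈ D, EvLE f d) ∧ c = Cardinal.mk D}

/-- The region strictly above the graph of `f`. -/
def aboveGraph (f : ℕ → ℕ) : Set (ℕ × ℕ) := {p | f p.1 < p.2}

/-- `c k = {(i,n) : i ≥ k}`. -/
def tailCol (k : ℕ) : Set (ℕ × ℕ) := {p | k ≤ p.1}

theorem exists_dominating_family_mk_eq_dNum :
    ∃ F : Set (ℕ → ℕ), (∀ g : ℕ → ℕ, ∃ f ∈ F, EvLE g f) ∧ Cardinal.mk F = dNum := by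
  have hne : {c | ∃ D : Set (ℕ → ℕ), (∀ f : ℕ → ℕ, ∃ d ∈ D, EvLE f d) ∧
      c = Cardinal.mk D}.Nonempty :=
    ⟨_, univ, fun f => ⟨f, mem_univ f, Filter.Eventually.of_forall fun _ => le_rfl⟩, rfl⟩
  obtain ⟨F, hdom, hcard⟩ := csInf_mem hne
  exact ⟨F, hdom, hcard.symm⟩

theorem aboveGraph_injective : Function.Injective aboveGraph := by
  intro f g h
  funext i
  have hmem : ∀ n, f i < n ↔ g i < n := fun n => Set.ext_iff.mp h (i, n)
  have hgf := (hmem (f i + 1)).mp (Nat.lt_succ_self _)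
  have hfg := (hmem (g i + 1)).mpr (Nat.lt_succ_self _)
  omega

theorem asubG_of_subset {α : Type*} {a b : Set α} (h : a ⊆ b) : ASubG a b := by
  simp [ASubG, sdiff_eq_empty.mpr h]

theorem tailCol_succ_subset (k : ℕ) : tailCol (k + 1) ⊆ tailCol k :=
  fun _ (hp : k + 1 ≤ _) => Nat.le_of_succ_le hp

theorem infinite_tailCol_inter_aboveGraph (k : ℕ) (f : ℕ → ℕ) :
    (tailCol k ∩ aboveGraph f).Infinite := by
  refine infinite_of_injective_forall_mem (f := fun m => (m + k, f (m + k) + 1)) ?_ ?_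
  · intro a b hab
    simpa using congrArg Prod.fst hab
  · intro m
    exact ⟨Nat.le_add_left k m, Nat.lt_succ_self _⟩

theorem finite_column_of_asubG_tailCol {c : Set (ℕ × ℕ)} {i : ℕ}
    (hc : ASubG c (tailCol (i + 1))) : {n | (i, n) ∈ c}.Finite :=
  Finite.of_finite_image (f := Prod.mk i)
    (hc.subset (by rintro _ ⟨n, hn, rfl⟩; exact ⟨hn, by simp [tailCol]⟩))
    (Prod.mk_right_injective i).injOn

theorem exists_subset_below_of_asubG_tailCol {c : Set (ℕ × ℕ)}
    (hc : ∀ k, ASubG c (tailCol k)) : ∃ g : ℕ → ℕ, ∀ p ∈ c, p.2 ≤ g p.1 := by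
  choose g hg using fun i => (finite_column_of_asubG_tailCol (hc (i + 1))).bddAbove
  exact ⟨g, fun p hp => hg p.1 hp⟩

theorem finite_inter_aboveGraph_of_evLE {c : Set (ℕ × ℕ)} {g f : ℕ → ℕ}
    (hc : ∀ k, ASubG c (tailCol k)) (hcg : ∀ p ∈ c, p.2 ≤ g p.1) (hgf : EvLE g f) :
    (c ∩ aboveGraph f).Finite := by
  obtain ⟨N, hN⟩ := Filter.eventually_atTop.mp hgf
  refine (hc N).subset fun p ⟨hpc, hpf⟩ => ⟨hpc, fun hpN => ?_⟩
  have hpf : f p.1 < p.2 := hpf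
  have := hcg p hpc
  have := hN p.1 hpN
  omega

/-- There is a family `G = {b_f : f ∈ F}` (for `F` a dominating family of size 𝔡)
of subsets of ℕ×ℕ of cardinality 𝔡, and a ⊆*-decreasing sequence `(cₖ)` of subsets
of ℕ×ℕ each meeting every member of `G` in an infinite set, such that no
`c ⊆* cₖ` (for all `k`) has infinite intersection with every member of `G`. -/
theorem stmt4 :
    ∃ F : Set (ℕ → ℕ), (∀ g : ℕ → ℕ, ∃ f ∈ F, EvLE g f) ∧
      Cardinal.mk (Set.image aboveGraph F) = dNum ∧
      (∀ k : ℕ, ASubG (tailCol (k + 1)) (tailCol k)) ∧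
      (∀ k : ℕ, ∀ f ∈ F, (tailCol k ∩ aboveGraph f).Infinite) ∧
      ∀ c : Set (ℕ × ℕ), (∀ k : ℕ, ASubG c (tailCol k)) →
        ¬ ∀ f ∈ F, (c ∩ aboveGraph f).Infinite := by
  obtain ⟨F, hdom, hcard⟩ := exists_dominating_family_mk_eq_dNum
  refine ⟨F, hdom, (Cardinal.mk_image_eq aboveGraph_injective).trans hcard,
    fun k => asubG_of_subset (tailCol_succ_subset k),
    fun k f _ => infinite_tailCol_inter_aboveGraph k f, fun c hc hinf => ?_⟩
  obtain ⟨g, hcg⟩ := exists_subset_below_of_asubG_tailCol hc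
  obtain ⟨f, hfF, hgf⟩ := hdom g
  exact hinf f hfF (finite_inter_aboveGraph_of_evLE hc hcg hgf)
end

section
/- Let H be a family of infinite subsets of ℕ with |H| < 𝔟 and let f : ℕ → ℕ. Then there exists a strictly increasing π : ℕ → ℕ with π(0) = 0 such that for every b ∈ H, |b ∩ [π(n), π(n+1))| ≥ f(n) for all but finitely many n. -/
/-!
Fix a nondecreasing majorant `F` of `f`. For each `b ∈ H`, pick `g_b k` such that `b ∩ [k, g_b k)`
has at least `F k` elements. Fewer than `𝔟` functions `g_b` are dominated by
one `h`, and iterating `k ↦ max (h k) (k + 1)` from `0` gives a partition whose interval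
`[π n, π (n + 1))` contains `[π n, g_b (π n))` once `π n` is large, hence at least
`F (π n) ≥ f n` elements of `b`.
-/

open Set

/-- The unbounding number 𝔟. -/
noncomputable def bNum : Cardinal :=
  sInf {c | ∃ H : Set (ℕ → ℕ), (¬ ∃ h, ∀ f ∈ H, EvLE f h) ∧ c = Cardinal.mk H}

theorem Set.Infinite.exists_le_ncard_inter_Ico {b : Set ℕ} (hb : b.Infinite) (k m : ℕ) :
    ∃ M, m ≤ (b ∩ Ico k M).ncard := by
  have htail : (b \ Iio k).Infinite := hb.sdiff (finite_Iio k)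
  obtain ⟨t, htb, rfl⟩ := htail.exists_subset_card_eq m
  refine ⟨t.sup id + 1, ?_⟩
  have hsub : (t : Set ℕ) ⊆ b ∩ Ico k (t.sup id + 1) := fun x hx =>
    ⟨(htb hx).1, not_lt.mp (htb hx).2, Nat.lt_succ_of_le (Finset.le_sup (f := id) hx)⟩
  simpa using ncard_le_ncard hsub ((finite_Ico _ _).inter_of_right _)

theorem ncard_inter_Ico_mono_right (b : Set ℕ) (k : ℕ) {m m' : ℕ} (h : m ≤ m') :
    (b ∩ Ico k m).ncard ≤ (b ∩ Ico k m').ncard :=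
  ncard_le_ncard (inter_subset_inter_right _ (Ico_subset_Ico_right h))
    ((finite_Ico _ _).inter_of_right _)

theorem exists_forall_evLE_of_mk_lt_bNum {ι : Type} (s : Set ι) (g : ι → ℕ → ℕ)
    (hs : Cardinal.mk s < bNum) : ∃ h, ∀ i ∈ s, EvLE (g i) h := by
  by_contra! hunb
  have hmem : Cardinal.mk (g '' s) ∈
      {c | ∃ G : Set (ℕ → ℕ), (¬ ∃ h, ∀ f ∈ G, EvLE f h) ∧ c = Cardinal.mk G} := by
    refine ⟨g '' s, ?_, rfl⟩
    rintro ⟨h, hh⟩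
    obtain ⟨i, hi, hnot⟩ := hunb h
    exact hnot (hh _ (mem_image_of_mem g hi))
  exact (csInf_le' hmem |>.trans Cardinal.mk_image_le).not_gt hs

theorem exists_strictMono_zero_and_le_succ (h : ℕ → ℕ) :
    ∃ π : ℕ → ℕ, StrictMono π ∧ π 0 = 0 ∧ ∀ n, h (π n) ≤ π (n + 1) := by
  set step : ℕ → ℕ := fun k => max (h k) (k + 1)
  have hsucc : ∀ n, step^[n + 1] 0 = step (step^[n] 0) := fun n =>
    Function.iterate_succ_apply' step n 0
  refine ⟨fun n => step^[n] 0, strictMono_nat_of_lt_succ fun n => ?_, rfl, fun n => ?_⟩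
  · rw [hsucc]
    exact (Nat.lt_succ_self _).trans_le (le_max_right _ _)
  · show h (step^[n] 0) ≤ step^[n + 1] 0
    rw [hsucc]
    exact le_max_left _ _

/-- For a family `H` of infinite subsets of ℕ with `|H| < 𝔟` and any `f : ℕ → ℕ`,
there is a partition function `π` (strictly increasing, `π 0 = 0`) such that for
every `b ∈ H`, `|b ∩ [π n, π (n+1))| ≥ f n` for all but finitely many `n`. -/
theorem stmt5 (H : Set (Set ℕ)) (hH : ∀ b ∈ H, b.Infinite)
    (hcard : Cardinal.mk H < bNum) (f : ℕ → ℕ) :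
    ∃ π : ℕ → ℕ, StrictMono π ∧ π 0 = 0 ∧
      ∀ b ∈ H, ∀ᶠ n in Filter.atTop,
        f n ≤ (b ∩ Set.Ico (π n) (π (n + 1))).ncard := by
  set F : ℕ → ℕ := fun k => (Finset.range (k + 1)).sup f
  have hF : ∀ {n k}, n ≤ k → f n ≤ F k := fun hnk =>
    Finset.le_sup (Finset.mem_range.2 (Nat.lt_succ_of_le hnk))
  choose! g hg using fun b (hb : b ∈ H) k => (hH b hb).exists_le_ncard_inter_Ico k (F k)
  obtain ⟨h, hh⟩ := exists_forall_evLE_of_mk_lt_bNum H g hcard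
  obtain ⟨π, hπ, hπ0, hπh⟩ := exists_strictMono_zero_and_le_succ h
  refine ⟨π, hπ, hπ0, fun b hb => ?_⟩
  obtain ⟨N, hN⟩ := Filter.eventually_atTop.mp (hh b hb)
  filter_upwards [Filter.eventually_ge_atTop N] with n hn
  calc f n ≤ F (π n) := hF hπ.le_apply
    _ ≤ (b ∩ Ico (π n) (g b (π n))).ncard := hg b hb (π n)
    _ ≤ (b ∩ Ico (π n) (π (n + 1))).ncard :=
      ncard_inter_Ico_mono_right b _ ((hN _ (hn.trans hπ.le_apply)).trans (hπh n))
end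

section
/- Let π be a partition function with intervals I_π(n) and t, b ⊆ ℕ; write t(n) = t ∩ I_π(n), b(n) = b ∩ I_π(n). Let μ_t be the product over n of the measures ν_{I_π(n), t} on 𝒫(I_π(n)) (uniform measure on subsets of t(n)). If ∑ₙ 2^{−|t(n) ∩ b(n)|} < ∞ then the set of x with x(n) ∩ b(n) ≠ ∅ for all but finitely many n has μ_t-measure 1; otherwise this set has μ_t-measure 0. -/
/-! The events `Aₙ = {x | x(n) ∩ b(n) = ∅}` depend on disjoint coordinates, so the cylinder
formula makes them independent, with `μ Aₙ = 2^{-|t(n) ∩ b(n)|}` (a uniform subset of `t(n)`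
misses `b(n)` iff it lies in `t(n) \ b(n)`). The set in question is the complement of
`limsup Aₙ`, so the two halves are the two Borel–Cantelli lemmas. -/

open Set MeasureTheory Filter
open scoped ENNReal

noncomputable instance : MeasurableSpace (Set ℕ) := ⊤

/-- The `n`-th interval `I_π(n) = [π n, π (n+1))` of the partition function `π`. -/
def Iblk (π : ℕ → ℕ) (n : ℕ) : Set ℕ := Set.Ico (π n) (π (n + 1))

/-- The factor probability `ν_{I_π(n), t}` : the uniform probability measure on
subsets of `t ∩ I_π(n)`, given by counting. -/
noncomputable def nuFun (t : Set ℕ) (π : ℕ → ℕ) (n : ℕ) (U : Set (Set ℕ)) : ℝ≥0∞ :=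
  ({s : Set ℕ | s ⊆ t ∩ Iblk π n ∧ s ∈ U}.ncard : ℝ≥0∞) / 2 ^ (t ∩ Iblk π n).ncard

open ProbabilityTheory

lemma ncard_powerset_sdiff_div_two_pow {α : Type*} {F : Set α} (hF : F.Finite) (b : Set α) :
    ((𝒫 (F \ b)).ncard : ℝ≥0∞) / 2 ^ F.ncard = 2⁻¹ ^ (F ∩ b).ncard := by
  rw [ncard_powerset _ hF.sdiff, ← ncard_inter_add_ncard_sdiff_eq_ncard F b hF, pow_add,
    Nat.cast_pow, Nat.cast_ofNat, ENNReal.div_eq_inv_mul, ENNReal.mul_inv (by simp) (by simp),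
    mul_assoc, ENNReal.inv_mul_cancel (by simp) (by simp), mul_one, ENNReal.inv_pow]

lemma inter_Iblk_finite (t : Set ℕ) (π : ℕ → ℕ) (n : ℕ) : (t ∩ Iblk π n).Finite :=
  (finite_Ico _ _).inter_of_right t

lemma nuFun_univ (t : Set ℕ) (π : ℕ → ℕ) (n : ℕ) : nuFun t π n univ = 1 := by
  have h := ncard_powerset_sdiff_div_two_pow (inter_Iblk_finite t π n) ∅
  rw [sdiff_empty, inter_empty, ncard_empty, pow_zero] at h
  rw [nuFun]
  simp only [mem_univ, and_true]
  exact h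

lemma nuFun_setOf_inter_eq_empty (t b : Set ℕ) (π : ℕ → ℕ) (n : ℕ) :
    nuFun t π n {s | s ∩ b ∩ Iblk π n = ∅} = 2⁻¹ ^ (t ∩ b ∩ Iblk π n).ncard := by
  have hset : {s : Set ℕ | s ⊆ t ∩ Iblk π n ∧ s ∈ {s | s ∩ b ∩ Iblk π n = ∅}} =
      𝒫 ((t ∩ Iblk π n) \ b) := by
    ext s
    simp only [mem_ofPred_eq, mem_powerset_iff, subset_def, eq_empty_iff_forall_notMem,
      mem_inter_iff, Set.mem_sdiff]
    grind
  rw [nuFun, hset, ncard_powerset_sdiff_div_two_pow (inter_Iblk_finite t π n), inter_right_comm]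

section Cylinder

variable {β : Type*} [MeasurableSpace β] {μ : Measure (ℕ → β)} {ν : ℕ → Set β → ℝ≥0∞}

theorem measure_biInter_eval_mem_of_cylinder (hν : ∀ k, ν k univ = 1)
    (hprod : ∀ (m : ℕ) (U : ℕ → Set β),
      μ {x | ∀ k < m, x k ∈ U k} = ∏ k ∈ Finset.range m, ν k (U k))
    (S : Finset ℕ) (E : ℕ → Set β) :
    μ (⋂ k ∈ S, {x | x k ∈ E k}) = ∏ k ∈ S, ν k (E k) := by
  classical
  obtain ⟨m, hm⟩ := S.exists_nat_subset_range
  let U : ℕ → Set β := fun k => if k ∈ S then E k else univ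
  have hcyl : {x : ℕ → β | ∀ k < m, x k ∈ U k} = ⋂ k ∈ S, {x | x k ∈ E k} := by
    ext x
    simp only [mem_ofPred_eq, mem_iInter, U]
    refine ⟨fun h k hk => by simpa [hk] using h k (Finset.mem_range.1 (hm hk)), fun h k _ => ?_⟩
    split_ifs with hk
    exacts [h k hk, mem_univ _]
  rw [← hcyl, hprod, ← Finset.prod_subset hm fun k _ hk => by simp [U, hk, hν]]
  exact Finset.prod_congr rfl fun k hk => by simp [U, hk]

theorem measure_eval_mem_of_cylinder (hν : ∀ k, ν k univ = 1)
    (hprod : ∀ (m : ℕ) (U : ℕ → Set β),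
      μ {x | ∀ k < m, x k ∈ U k} = ∏ k ∈ Finset.range m, ν k (U k))
    (k : ℕ) (E : Set β) :
    μ {x | x k ∈ E} = ν k E := by
  simpa using measure_biInter_eval_mem_of_cylinder hν hprod {k} fun _ => E

theorem iIndepSet_eval_mem_of_cylinder (hν : ∀ k, ν k univ = 1)
    (hprod : ∀ (m : ℕ) (U : ℕ → Set β),
      μ {x | ∀ k < m, x k ∈ U k} = ∏ k ∈ Finset.range m, ν k (U k))
    {E : ℕ → Set β} (hE : ∀ k, MeasurableSet (E k)) :
    iIndepSet (fun k => {x : ℕ → β | x k ∈ E k}) μ := by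
  refine (iIndepSet_iff_meas_biInter fun k => measurable_pi_apply k (hE k)).2 fun S => ?_
  refine (measure_biInter_eval_mem_of_cylinder hν hprod S E).trans
    (Finset.prod_congr rfl fun k _ => ?_)
  exact (measure_eval_mem_of_cylinder hν hprod k (E k)).symm

end Cylinder

theorem stmt7_general (π : ℕ → ℕ) (t b : Set ℕ)
    (μ : Measure (ℕ → Set ℕ)) [IsProbabilityMeasure μ]
    (hprod : ∀ (m : ℕ) (U : ℕ → Set (Set ℕ)),
      μ {x | ∀ k < m, x k ∈ U k} = ∏ k ∈ Finset.range m, nuFun t π k (U k)) :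
    ((∑' n, (2 : ℝ≥0∞)⁻¹ ^ (t ∩ b ∩ Iblk π n).ncard) ≠ ⊤ →
      μ {x | ∀ᶠ n in atTop, (x n ∩ b ∩ Iblk π n).Nonempty} = 1) ∧
    ((∑' n, (2 : ℝ≥0∞)⁻¹ ^ (t ∩ b ∩ Iblk π n).ncard) = ⊤ →
      μ {x | ∀ᶠ n in atTop, (x n ∩ b ∩ Iblk π n).Nonempty} = 0) := by
  let E : ℕ → Set (Set ℕ) := fun n => {s | s ∩ b ∩ Iblk π n = ∅}
  let A : ℕ → Set (ℕ → Set ℕ) := fun n => {x | x n ∈ E n}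
  have hA : ∀ n, MeasurableSet (A n) := fun n => measurable_pi_apply n trivial
  have hμA : ∀ n, μ (A n) = 2⁻¹ ^ (t ∩ b ∩ Iblk π n).ncard := fun n =>
    (measure_eval_mem_of_cylinder (nuFun_univ t π) hprod n (E n)).trans
      (nuFun_setOf_inter_eq_empty t b π n)
  have hevent : {x : ℕ → Set ℕ | ∀ᶠ n in atTop, (x n ∩ b ∩ Iblk π n).Nonempty}
      = (limsup A atTop)ᶜ := by
    ext x
    simp [mem_limsup_iff_frequently_mem, A, E, nonempty_iff_ne_empty]
  simp_rw [hevent, ← hμA]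
  refine ⟨fun hsum => ?_, fun hsum => ?_⟩
  · exact (prob_compl_eq_one_iff (.measurableSet_limsup hA)).2
      (measure_limsup_atTop_eq_zero hsum)
  · exact (prob_compl_eq_zero_iff (.measurableSet_limsup hA)).2
      (measure_limsup_eq_one hA (iIndepSet_eval_mem_of_cylinder (nuFun_univ t π) hprod
        fun _ => trivial) hsum)

/-- Let `μ` be the product measure `μ_t = ∏ₙ ν_{I_π(n),t}` on `∏ₙ 𝒫(I_π(n)) ≅ 𝒫(ℕ)`
(characterized on cylinders). If `∑ₙ 2^{−|t(n) ∩ b(n)|} < ∞` then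
`{x : x(n) ∩ b(n) ≠ ∅ for all but finitely many n}` has `μ_t`-measure 1;
otherwise it has `μ_t`-measure 0. -/
theorem stmt7 (π : ℕ → ℕ) (hπ0 : π 0 = 0) (hπ : StrictMono π) (t b : Set ℕ)
    (μ : Measure (ℕ → Set ℕ)) [IsProbabilityMeasure μ]
    (hprod : ∀ (m : ℕ) (U : ℕ → Set (Set ℕ)),
      μ {x | ∀ k < m, x k ∈ U k} = ∏ k ∈ Finset.range m, nuFun t π k (U k)) :
    ((∑' n, (2 : ℝ≥0∞)⁻¹ ^ (t ∩ b ∩ Iblk π n).ncard) ≠ ⊤ →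
      μ {x | ∀ᶠ n in atTop, (x n ∩ b ∩ Iblk π n).Nonempty} = 1) ∧
    ((∑' n, (2 : ℝ≥0∞)⁻¹ ^ (t ∩ b ∩ Iblk π n).ncard) = ⊤ →
      μ {x | ∀ᶠ n in atTop, (x n ∩ b ∩ Iblk π n).Nonempty} = 0) :=
  stmt7_general π t b μ hprod
end

section
/- Loeb's lemma: Let 𝒰 be an ultrafilter on an index set I which is not countably complete, and let ℱ_𝒰 be the field of ultraproduct sets ∏ᵢ Aᵢ / 𝒰 (Aᵢ ∈ ℱᵢ for fields ℱᵢ of subsets of Xᵢ). Then no member of ℱ_𝒰 is the union of a countably infinite pairwise disjoint subfamily of ℱ_𝒰; more precisely, if A ∈ ℱ_𝒰 and A ⊆ ⋃ₙ Aₙ with each Aₙ ∈ ℱ_𝒰, then A ⊆ A₀ ∪ ⋯ ∪ Aₙ for some n. -/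
/-!
A countable family `Jₙ ∈ 𝒰` with `⋂ₙ Jₙ ∉ 𝒰` yields `d i := min {n | i ∉ Jₙ}` (`0` on `⋂ₙ Jₙ`), which tends to
infinity along `𝒰`. Suppose `[a] ⊆ ⋃ₙ [eₙ]` had no finite subcover, and pick `xₙ ∈ [a]` outside
`[e₀] ∪ ⋯ ∪ [eₙ]`. Shrinking `d`, we may assume that `𝒰`-almost every `i` is a good coordinate of
`x_{d i}`, i.e. `x_{d i} i ∈ aᵢ` and `x_{d i} i ∉ e_{m,i}` for `m ≤ d i`. The diagonal
`y i = x_{d i} i` then lies in `[a]` but in no `[eₘ]`, since `m ≤ d i` for almost every `i`.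
-/

open Set

variable {I : Type*} {X : I → Type*}

/-- Equivalence modulo an ultrafilter: `x ≡ y` iff `{i : x i = y i} ∈ 𝒰`. -/
def uSetoid (𝒰 : Ultrafilter I) (X : I → Type*) : Setoid (∀ i, X i) where
  r x y := {i | x i = y i} ∈ 𝒰
  iseqv := by
    refine ⟨fun x => ?_, fun {x y} h => ?_, fun {x y z} hxy hyz => ?_⟩
    · exact Filter.univ_mem' fun i => rfl
    · exact Filter.mem_of_superset h fun i hi => hi.symm
    · exact Filter.mem_of_superset (Filter.inter_mem hxy hyz)
        fun i hi => hi.1.trans hi.2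

/-- The set ultraproduct `∏ᵢ Xᵢ / 𝒰`. -/
def uProd (𝒰 : Ultrafilter I) (X : I → Type*) := Quotient (uSetoid 𝒰 X)

/-- The ultraproduct set `[A] = ∏ᵢ Aᵢ / 𝒰` as a subset of the set ultraproduct. -/
def uSet (𝒰 : Ultrafilter I) (A : ∀ i, Set (X i)) : Set (uProd 𝒰 X) :=
  {q | ∃ x : ∀ i, X i, Quotient.mk (uSetoid 𝒰 X) x = q ∧ {i | x i ∈ A i} ∈ 𝒰}

open Filter Function

theorem Ultrafilter.exists_tendsto_atTop_of_iInter_notMem (𝒰 : Ultrafilter I) (J : ℕ → Set I)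
    (hJ : ∀ n, J n ∈ 𝒰) (hJ_iInter : ⋂ n, J n ∉ 𝒰) : ∃ d : I → ℕ, Tendsto d 𝒰 atTop := by
  classical
  refine ⟨fun i => if h : ∃ n, i ∉ J n then Nat.find h else 0, tendsto_atTop.2 fun n => ?_⟩
  have h_out : ∀ᶠ i in (𝒰 : Filter I), i ∉ ⋂ n, J n := Ultrafilter.compl_mem_iff_notMem.2 hJ_iInter
  have h_in : ∀ᶠ i in (𝒰 : Filter I), ∀ k ∈ Iio n, i ∈ J k :=
    (eventually_all_finite (finite_Iio n)).2 fun k _ => hJ k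
  filter_upwards [h_out, h_in] with i hi_out hi_in
  have h : ∃ n, i ∉ J n := by simpa only [mem_iInter, not_forall] using hi_out
  rw [dif_pos h, Nat.le_find_iff]
  exact fun m hm => not_not.2 (hi_in m hm)

theorem Filter.Tendsto.exists_tendsto_atTop_eventually_diag {f : Filter I} {d : I → ℕ}
    (hd : Tendsto d f atTop) {P : ℕ → I → Prop} (hP : ∀ n, ∀ᶠ i in f, P n i) :
    ∃ d' : I → ℕ, Tendsto d' f atTop ∧ ∀ᶠ i in f, P (d' i) i := by
  classical
  refine ⟨fun i => Nat.findGreatest (fun n => ∀ k ≤ n, P k i) (d i), ?_, ?_⟩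
  · refine tendsto_atTop.2 fun n => ?_
    filter_upwards [tendsto_atTop.1 hd n, (eventually_all_finite (finite_Iic n)).2 fun k _ => hP k]
      with i hn hP_le
    exact Nat.le_findGreatest hn hP_le
  · filter_upwards [hP 0] with i hP0
    have hP_le_zero : ∀ k ≤ 0, P k i := fun k hk => Nat.le_zero.1 hk ▸ hP0
    exact Nat.findGreatest_spec (P := fun n => ∀ k ≤ n, P k i) (Nat.zero_le _) hP_le_zero _ le_rfl

theorem mk_mem_uSet_iff {𝒰 : Ultrafilter I} {A : ∀ i, Set (X i)} {x : ∀ i, X i} :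
    Quotient.mk (uSetoid 𝒰 X) x ∈ uSet 𝒰 A ↔ ∀ᶠ i in (𝒰 : Filter I), x i ∈ A i := by
  refine ⟨fun ⟨x', hx', hx'A⟩ => ?_, fun hxA => ⟨x, rfl, hxA⟩⟩
  filter_upwards [hx'A, Quotient.exact hx'] with i hi heq
  exact heq ▸ hi

theorem exists_uSet_subset_biUnion_of_subset_iUnion {𝒰 : Ultrafilter I} {d : I → ℕ}
    (hd : Tendsto d 𝒰 atTop) {a : ∀ i, Set (X i)} {e : ℕ → ∀ i, Set (X i)}
    (h : uSet 𝒰 a ⊆ ⋃ n, uSet 𝒰 (e n)) : ∃ N, uSet 𝒰 a ⊆ ⋃ n ≤ N, uSet 𝒰 (e n) := by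
  by_contra! hN
  have h_witness : ∀ N, ∃ x : ∀ i, X i,
      (∀ᶠ i in (𝒰 : Filter I), x i ∈ a i) ∧ ∀ m ≤ N, ∀ᶠ i in (𝒰 : Filter I), x i ∉ e m i := by
    intro N
    obtain ⟨q, hqa, hqe⟩ := not_subset.1 (hN N)
    induction q using Quotient.inductionOn with | h x => ?_
    refine ⟨x, mk_mem_uSet_iff.1 hqa, fun m hm => ?_⟩
    exact Ultrafilter.eventually_not.2 fun hxe => hqe (mem_biUnion hm (mk_mem_uSet_iff.2 hxe))
  choose x hxa hxe using h_witness
  obtain ⟨d', hd', hgood⟩ := hd.exists_tendsto_atTop_eventually_diag (P := fun n i =>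
    x n i ∈ a i ∧ ∀ m ≤ n, x n i ∉ e m i) fun n =>
    (hxa n).and ((eventually_all_finite (finite_Iic n)).2 (hxe n))
  obtain ⟨m, hm⟩ := mem_iUnion.1 (h (mk_mem_uSet_iff.2 (hgood.mono fun i hi => hi.1)))
  obtain ⟨i, hi_good, hi_le, hi_e⟩ :=
    (hgood.and ((tendsto_atTop.1 hd' m).and (mk_mem_uSet_iff.1 hm))).exists
  exact hi_good.2 m hi_le hi_e

theorem Set.not_iUnion_subset_biUnion_le {α : Type*} {s : ℕ → Set α}
    (hs : Pairwise (Disjoint on s)) (hne : ∀ n, (s n).Nonempty) (N : ℕ) :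
    ¬ ⋃ n, s n ⊆ ⋃ n ≤ N, s n := by
  intro hsub
  obtain ⟨q, hq⟩ := hne (N + 1)
  obtain ⟨n, hn, hqn⟩ := mem_iUnion₂.1 (hsub (mem_iUnion_of_mem _ hq))
  exact disjoint_left.1 (hs (by omega : n ≠ N + 1)) hqn hq

/-- Loeb's lemma: if `𝒰` is not countably complete, then no ultraproduct set is
the union of a countably infinite pairwise disjoint family of (nonempty)
ultraproduct sets; more precisely, if `[a] ⊆ ⋃ₙ [eₙ]` then `[a]` is covered by
finitely many `[eₙ]`. -/
theorem stmt10 (𝒰 : Ultrafilter I)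
    (hcc : ∃ J : ℕ → Set I, (∀ n, J n ∈ 𝒰) ∧ (⋂ n, J n) ∉ 𝒰) :
    (∀ (a : ∀ i, Set (X i)) (e : ℕ → ∀ i, Set (X i)),
      (∀ m n, m ≠ n → Disjoint (uSet 𝒰 (e m)) (uSet 𝒰 (e n))) →
      (∀ n, (uSet 𝒰 (e n)).Nonempty) →
      uSet 𝒰 a ≠ ⋃ n, uSet 𝒰 (e n)) ∧
    (∀ (a : ∀ i, Set (X i)) (e : ℕ → ∀ i, Set (X i)),
      uSet 𝒰 a ⊆ ⋃ n, uSet 𝒰 (e n) →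
      ∃ N : ℕ, uSet 𝒰 a ⊆ ⋃ n ≤ N, uSet 𝒰 (e n)) := by
  obtain ⟨J, hJ, hJ_iInter⟩ := hcc
  obtain ⟨d, hd⟩ := 𝒰.exists_tendsto_atTop_of_iInter_notMem J hJ hJ_iInter
  have h_finite_cover := fun (a : ∀ i, Set (X i)) (e : ℕ → ∀ i, Set (X i)) =>
    exists_uSet_subset_biUnion_of_subset_iUnion (a := a) (e := e) hd
  refine ⟨fun a e hdisj hne heq => ?_, h_finite_cover⟩
  obtain ⟨N, hN⟩ := h_finite_cover a e heq.subset
  exact not_iUnion_subset_biUnion_le hdisj hne N (heq ▸ hN)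
end

section
/- Let 𝒱 be a σ-complete ultrafilter on I over M, and suppose (ℳᵢ, Xᵢ : i ∈ I) ∈ M is a sequence of σ-algebras ℳᵢ of subsets of Xᵢ. If ([Eₙ] : n ∈ ℕ) ∈ M is a sequence of members of ℳ_𝒱^M, then ⋃ₙ [Eₙ] = [E] where E(i) = ⋃ₙ Eₙ(i). Consequently ℳ_𝒱^M is a σ-algebra over M of subsets of ∏ᵢ Xᵢ/𝒱. -/
open Set Filter

/-! If the complement of each `A n` is in `V` then, by σ-completeness, so is the complement of
`⋃ n, A n`; since `V` decides each `A n`, some `A n` must lie in `V` once the union does. -/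

namespace Filter

theorem exists_mem_of_iUnion_mem {I ι : Type*} {V : Filter I} [V.NeBot] {A : ι → Set I}
    (hdecide : ∀ n, A n ∈ V ∨ (A n)ᶜ ∈ V)
    (hsigma : (∀ n, (A n)ᶜ ∈ V) → (⋂ n, (A n)ᶜ) ∈ V)
    (hunion : (⋃ n, A n) ∈ V) : ∃ n, A n ∈ V := by
  by_contra! hnone
  have hcompl : (⋃ n, A n)ᶜ ∈ V := by
    rw [compl_iUnion]
    exact hsigma fun n => (hdecide n).resolve_left (hnone n)
  exact compl_notMem hunion hcompl

theorem iUnion_mem_iff_exists_mem {I ι : Type*} {V : Filter I} [V.NeBot] {A : ι → Set I}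
    (hdecide : ∀ n, A n ∈ V ∨ (A n)ᶜ ∈ V)
    (hsigma : (∀ n, (A n)ᶜ ∈ V) → (⋂ n, (A n)ᶜ) ∈ V) :
    (⋃ n, A n) ∈ V ↔ ∃ n, A n ∈ V :=
  ⟨exists_mem_of_iUnion_mem hdecide hsigma,
    fun ⟨n, hn⟩ => mem_of_superset hn (subset_iUnion A n)⟩

end Filter

/-- Let `𝒱` be a filter on `I` which is an ultrafilter over a model `M` and
σ-complete over `M` (subsets of `I` in `M` recorded by `MS`, sequences in `M` by
`Mω`, functions in `M` by `Mfun`), and let `(Eₙ)` be a sequence in `M` of members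
of the field `ℳ_𝒱^M`.  Then `⋃ₙ [Eₙ] = [E]` where `E(i) = ⋃ₙ Eₙ(i)`: for every
representative `x` in `M`, `[x] ∈ [E]` iff `[x] ∈ [Eₙ]` for some `n`.
Consequently `ℳ_𝒱^M` is a σ-algebra over `M`. -/
theorem stmt13 {I : Type*} {X : I → Type*} (V : Filter I) [V.NeBot]
    (MS : Set (Set I)) (Mω : Set (ℕ → Set I))
    (hultra : ∀ Y ∈ MS, Y ∈ V ∨ Yᶜ ∈ V)
    (hsigma : ∀ J ∈ Mω, (∀ n, J n ∈ V) → (⋂ n, J n) ∈ V)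
    (hcompl : ∀ J ∈ Mω, (fun n => (J n)ᶜ) ∈ Mω)
    (Mfun : Set (∀ i, X i))
    (E : ℕ → ∀ i, Set (X i))
    (hclosure : ∀ x ∈ Mfun,
      ((fun n => {i | x i ∈ E n i}) ∈ Mω) ∧ ∀ n, {i | x i ∈ E n i} ∈ MS) :
    ∀ x ∈ Mfun, ({i | x i ∈ ⋃ n, E n i} ∈ V ↔ ∃ n, {i | x i ∈ E n i} ∈ V) := by
  intro x hx
  obtain ⟨hseq, hmem⟩ := hclosure x hx
  have hunion : {i | x i ∈ ⋃ n, E n i} = ⋃ n, {i | x i ∈ E n i} := by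
    ext i
    simp only [mem_ofPred_eq, mem_iUnion]
  rw [hunion]
  exact iUnion_mem_iff_exists_mem (fun n => hultra _ (hmem n))
    (hsigma _ (hcompl _ hseq))
end

section
/- Let τ be a filtered order-type of cardinality |τ| < 𝔡* and λ < 𝔭 a limit ordinal. Then there is no universal (τ, λ*)-gap for ultrapowers of ℕ^ℕ: for any A, B ⊆ ℕ^ℕ with (A,B) a <*-pregap of type (τ, λ*), there exists h ∈ ℕ^ℕ and a nonprincipal ultrafilter 𝒰 on ℕ such that f <_𝒰 h <_𝒰 g for all f ∈ A, g ∈ B. -/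
/-!
Code `ℕ × ℕ` into `ℕ`. The hypographs `{(n, m) | m < b o n}` form a `⊆*`-decreasing filter base
of size `|λ| < 𝔭`, and since `λ` is a limit each of them meets every epigraph `{(n, m) | f n < m}`,
`f ∈ A`, in an infinite set. As `|A| < 𝔡*`, some `x` lies almost inside every hypograph while
meeting every epigraph infinitely often. The columns of `x` are then finite, and `h n`, the top of
the `n`-th column, satisfies `f < h < b o` on an infinite set for all `f ∈ A` and `o < λ`. As `A`
is `≤*`-directed and `b` is `<*`-decreasing, these sets form a `⊆*`-directed family of infinite
sets, which extends to a nonprincipal ultrafilter.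
-/

open Set

/-- `a ⊆* b` : almost containment of subsets of ℕ. -/
def ASub (a b : Set ℕ) : Prop := (a \ b).Finite

/-- `f <* g` : eventual strict domination. -/
def EvLT (f g : ℕ → ℕ) : Prop := ∀ᶠ n in Filter.atTop, f n < g n

/-- A filter-base of infinite subsets of ℕ. -/
def IsFilterBase (F : Set (Set ℕ)) : Prop :=
  (∀ a ∈ F, a.Infinite) ∧ ∀ G : Finset (Set ℕ), ↑G ⊆ F → (⋂ a ∈ G, a).Infinite

/-- `F` has an infinite pseudo-intersection. -/
def HasPseudoInter (F : Set (Set ℕ)) : Prop :=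
  ∃ x : Set ℕ, x.Infinite ∧ ∀ a ∈ F, ASub x a

/-- The pseudo-intersection number 𝔭. -/
noncomputable def pNum : Cardinal :=
  sInf {c | ∃ F : Set (Set ℕ), IsFilterBase F ∧ ¬ HasPseudoInter F ∧ c = Cardinal.mk F}

/-- The cardinal 𝔡*: the least cardinality of a family `H` of infinite subsets
of ℕ admitting a filter-base of size < 𝔭 of sets each meeting every member of `H`
in an infinite set, but with no pseudo-intersection with this property. -/
noncomputable def dStar : Cardinal :=
  sInf {c | ∃ H : Set (Set ℕ), (∀ h ∈ H, h.Infinite) ∧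
    (∃ F : Set (Set ℕ), IsFilterBase F ∧ Cardinal.mk F < pNum ∧
      (∀ a ∈ F, ∀ h ∈ H, (a ∩ h).Infinite) ∧
      ¬ ∃ x : Set ℕ, (∀ a ∈ F, ASub x a) ∧ ∀ h ∈ H, (x ∩ h).Infinite) ∧
    c = Cardinal.mk H}

open Filter

lemma aSub_iff_eventually {a c : Set ℕ} : ASub a c ↔ ∀ᶠ n in atTop, n ∈ a → n ∈ c := by
  rw [← Nat.cofinite_eq_atTop, eventually_cofinite]
  simp only [Classical.not_imp]
  rfl

lemma ASub.infinite {a c : Set ℕ} (h : ASub a c) (ha : a.Infinite) : c.Infinite :=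
  fun hc => ha ((h.union hc).subset (Set.subset_sdiff_union a c))

lemma isFilterBase_of_directed {F : Set (Set ℕ)} (hne : F.Nonempty) (hinf : ∀ a ∈ F, a.Infinite)
    (hdir : ∀ a ∈ F, ∀ c ∈ F, ∃ d ∈ F, ASub d a ∧ ASub d c) : IsFilterBase F := by
  refine ⟨hinf, fun G hG => ?_⟩
  obtain ⟨d, hdF, hdG⟩ : ∃ d ∈ F, ∀ a ∈ G, ASub d a := by
    induction G using Finset.induction_on with
    | empty => exact hne.imp fun d hd => ⟨hd, by simp⟩
    | insert a G _ ih =>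
      rw [Finset.coe_insert, Set.insert_subset_iff] at hG
      obtain ⟨d, hdF, hdG⟩ := ih hG.2
      obtain ⟨e, heF, hea, hed⟩ := hdir a hG.1 d hdF
      refine ⟨e, heF, Finset.forall_mem_insert _ _ _ |>.mpr ⟨hea, fun c hc => ?_⟩⟩
      exact aSub_iff_eventually.mpr <| ((aSub_iff_eventually.mp hed).and
        (aSub_iff_eventually.mp (hdG c hc))).mono fun n hn hne => hn.2 (hn.1 hne)
  refine ASub.infinite (aSub_iff_eventually.mpr ?_) (hinf d hdF)
  filter_upwards [(eventually_all_finset G).mpr fun a ha => aSub_iff_eventually.mp (hdG a ha)]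
    with n hn hnd using Set.mem_iInter₂.mpr fun a ha => hn a ha hnd

lemma exists_ultrafilter_le_cofinite_of_isFilterBase {F : Set (Set ℕ)} (hF : IsFilterBase F) :
    ∃ 𝒰 : Ultrafilter ℕ, (𝒰 : Filter ℕ) ≤ cofinite ∧ ∀ a ∈ F, a ∈ 𝒰 := by
  have : (generate F ⊓ cofinite).NeBot := by
    refine inf_neBot_iff.mpr fun s hs c hc => ?_
    obtain ⟨t, htF, htfin, hts⟩ := mem_generate_iff.mp hs
    have hinf : (⋂₀ t).Infinite := by
      simpa [Set.sInter_eq_biInter] using hF.2 htfin.toFinset (by simpa using htF)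
    simpa [Set.sdiff_compl] using ((hinf.mono hts).sdiff (mem_cofinite.mp hc)).nonempty
  have hle := Ultrafilter.of_le (generate F ⊓ cofinite)
  exact ⟨Ultrafilter.of _, hle.trans inf_le_right,
    fun a ha => hle (mem_inf_of_left (mem_generate_of_mem ha))⟩

lemma singleton_notMem_of_le_cofinite {𝒰 : Ultrafilter ℕ} (h𝒰 : (𝒰 : Filter ℕ) ≤ cofinite)
    (n : ℕ) : {n} ∉ 𝒰 :=
  Ultrafilter.compl_mem_iff_notMem.mp <| h𝒰 <| by simp

lemma exists_pseudoInter_of_mk_lt_dStar {H F : Set (Set ℕ)} (hH : ∀ h ∈ H, h.Infinite)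
    (hHcard : Cardinal.mk H < dStar) (hF : IsFilterBase F) (hFcard : Cardinal.mk F < pNum)
    (hmeet : ∀ a ∈ F, ∀ h ∈ H, (a ∩ h).Infinite) :
    ∃ x : Set ℕ, (∀ a ∈ F, ASub x a) ∧ ∀ h ∈ H, (x ∩ h).Infinite := by
  by_contra hno
  exact hHcard.not_ge (csInf_le' ⟨H, hH, ⟨F, hF, hFcard, hmeet, hno⟩, rfl⟩)

-- Subsets of `ℕ × ℕ` are coded as subsets of `ℕ` through `Nat.pair`.
def codedHypograph (g : ℕ → ℕ) : Set ℕ := {k | (Nat.unpair k).2 < g (Nat.unpair k).1}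

def codedEpigraph (f : ℕ → ℕ) : Set ℕ := {k | f (Nat.unpair k).1 < (Nat.unpair k).2}

def column (x : Set ℕ) (n : ℕ) : Set ℕ := {m | Nat.pair n m ∈ x}

noncomputable def columnSup (x : Set ℕ) (n : ℕ) : ℕ := sSup (column x n)

lemma infinite_of_frequently_pair_mem {T : Set ℕ} {g : ℕ → ℕ}
    (h : ∃ᶠ n in atTop, Nat.pair n (g n) ∈ T) : T.Infinite :=
  ((Nat.frequently_atTop_iff_infinite.mp h).image
    fun _ _ _ _ hab => (Nat.pair_eq_pair.mp hab).1).mono (Set.image_subset_iff.mpr fun _ hn => hn)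

lemma codedHypograph_infinite {g : ℕ → ℕ} (h : ∃ᶠ n in atTop, 0 < g n) :
    (codedHypograph g).Infinite :=
  infinite_of_frequently_pair_mem (g := fun _ => 0) (by simpa [codedHypograph] using h)

lemma codedHypograph_inter_codedEpigraph_infinite {f g : ℕ → ℕ}
    (h : ∃ᶠ n in atTop, f n + 1 < g n) : (codedHypograph g ∩ codedEpigraph f).Infinite :=
  infinite_of_frequently_pair_mem (g := fun n => f n + 1)
    (by simpa [codedHypograph, codedEpigraph] using h)

lemma codedEpigraph_infinite (f : ℕ → ℕ) : (codedEpigraph f).Infinite :=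
  infinite_of_frequently_pair_mem (g := fun n => f n + 1)
    (Frequently.of_forall fun n => by simp [codedEpigraph])

lemma aSub_codedHypograph {g g' : ℕ → ℕ} (h : EvLE g' g) :
    ASub (codedHypograph g') (codedHypograph g) := by
  have hbad : {n | ¬ g' n ≤ g n}.Finite :=
    eventually_cofinite.mp (by rw [Nat.cofinite_eq_atTop]; exact h)
  refine ((hbad.biUnion fun n _ => (Set.finite_singleton n).prod (Set.finite_Iio (g' n))).image
    (Function.uncurry Nat.pair)).subset fun k hk => ⟨Nat.unpair k, ?_, Nat.pair_unpair k⟩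
  simp only [codedHypograph, Set.mem_sdiff, Set.mem_ofPred_eq, not_lt] at hk
  simp only [Set.mem_iUnion, Set.mem_prod, Set.mem_singleton_iff, Set.mem_Iio]
  exact ⟨(Nat.unpair k).1, show ¬ _ ≤ _ by omega, rfl, hk.1⟩

lemma column_finite_of_aSub {x : Set ℕ} {g : ℕ → ℕ} (hx : ASub x (codedHypograph g)) (n : ℕ) :
    (column x n).Finite := by
  refine ((Set.finite_Iio (g n)).union (hx.preimage (f := Nat.pair n) fun _ _ _ _ h =>
    (Nat.pair_eq_pair.mp h).2)).subset fun m hm => ?_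
  by_cases hmg : m < g n
  · exact Or.inl hmg
  · exact Or.inr ⟨hm, by simpa [codedHypograph] using hmg⟩

lemma infinite_image_fst_of_column_finite {s : Set ℕ} (hcol : ∀ n, (column s n).Finite)
    (hs : s.Infinite) : ((fun k => (Nat.unpair k).1) '' s).Infinite := by
  refine fun hfin => hs ((hfin.biUnion fun n _ => (hcol n).image (Nat.pair n)).subset ?_)
  intro k hk
  refine Set.mem_biUnion (Set.mem_image_of_mem _ hk) ⟨(Nat.unpair k).2, ?_, Nat.pair_unpair k⟩
  simpa [column, Nat.pair_unpair] using hk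

lemma infinite_setOf_lt_columnSup {x : Set ℕ} {f : ℕ → ℕ} (hcol : ∀ n, (column x n).Finite)
    (hxf : (x ∩ codedEpigraph f).Infinite) : {n | f n < columnSup x n}.Infinite := by
  refine (infinite_image_fst_of_column_finite
    (fun n => (hcol n).subset fun _ hm => hm.1) hxf).mono ?_
  rintro _ ⟨k, ⟨hkx, hkf⟩, rfl⟩
  exact hkf.trans_le (le_csSup (hcol _).bddAbove (by simpa [column] using hkx))

lemma aSub_setOf_lt_columnSup {x : Set ℕ} {g : ℕ → ℕ} (hx : ASub x (codedHypograph g))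
    (f : ℕ → ℕ) :
    ASub {n | f n < columnSup x n} {n | f n < columnSup x n ∧ columnSup x n < g n} := by
  refine (hx.image fun k => (Nat.unpair k).1).subset fun n ⟨hfn, hng⟩ => ?_
  have hne : (column x n).Nonempty := by
    by_contra hemp
    simp [columnSup, Set.not_nonempty_iff_eq_empty.mp hemp] at hfn
  refine ⟨Nat.pair n (columnSup x n), ⟨Nat.sSup_mem hne (column_finite_of_aSub hx n).bddAbove,
    fun hg => hng ⟨hfn, ?_⟩⟩, by simp⟩
  simpa [codedHypograph] using hg

def EvStrictAnti {lam : Ordinal} (b : ∀ o : Ordinal, o < lam → ℕ → ℕ) : Prop :=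
  ∀ o o' (ho : o < lam) (ho' : o' < lam), o < o' → EvLT (b o' ho') (b o ho)

def hypographs (lam : Ordinal) (b : ∀ o : Ordinal, o < lam → ℕ → ℕ) : Set (Set ℕ) :=
  Set.range fun o : Set.Iio lam => codedHypograph (b o o.2)

lemma mk_hypographs_le (lam : Ordinal.{0}) (b : ∀ o : Ordinal, o < lam → ℕ → ℕ) :
    Cardinal.mk (hypographs lam b) ≤ lam.card := by
  have := Cardinal.mk_range_le_lift (f := fun o : Set.Iio lam => codedHypograph (b o o.2))
  rwa [Cardinal.lift_uzero, Cardinal.mk_Iio_ordinal, Cardinal.lift_le] at this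

namespace EvStrictAnti

variable {lam : Ordinal} {b : ∀ o : Ordinal, o < lam → ℕ → ℕ}

lemma evLE (hb : EvStrictAnti b) {o o' : Ordinal} (ho : o < lam) (ho' : o' < lam)
    (hoo' : o ≤ o') : EvLE (b o' ho') (b o ho) := by
  rcases hoo'.eq_or_lt with rfl | hlt
  · exact Eventually.of_forall fun _ => le_rfl
  · exact (hb o o' ho ho' hlt).mono fun _ => le_of_lt

lemma eventually_pos (hb : EvStrictAnti b) (hlim : Order.IsSuccLimit lam) {o : Ordinal}
    (ho : o < lam) : ∀ᶠ n in atTop, 0 < b o ho n :=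
  (hb _ _ ho (hlim.succ_lt ho) (Order.lt_succ o)).mono fun _ hn => (Nat.zero_le _).trans_lt hn

lemma eventually_add_one_lt (hb : EvStrictAnti b) (hlim : Order.IsSuccLimit lam) {f : ℕ → ℕ}
    (hf : ∀ o (ho : o < lam), EvLT f (b o ho)) {o : Ordinal} (ho : o < lam) :
    ∀ᶠ n in atTop, f n + 1 < b o ho n :=
  ((hf _ (hlim.succ_lt ho)).and (hb _ _ ho (hlim.succ_lt ho) (Order.lt_succ o))).mono
    fun _ hn => by omega

lemma isFilterBase_hypographs (hb : EvStrictAnti b) (hlim : Order.IsSuccLimit lam) :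
    IsFilterBase (hypographs lam b) := by
  refine isFilterBase_of_directed ⟨_, ⟨0, hlim.pos⟩, rfl⟩ ?_ ?_
  · rintro _ ⟨⟨o, ho⟩, rfl⟩
    exact codedHypograph_infinite (hb.eventually_pos hlim ho).frequently
  · rintro _ ⟨⟨o, ho⟩, rfl⟩ _ ⟨⟨o', ho'⟩, rfl⟩
    have hmax : max o o' < lam := max_lt ho ho'
    exact ⟨_, ⟨⟨max o o', hmax⟩, rfl⟩, aSub_codedHypograph (hb.evLE ho hmax (le_max_left o o')),
      aSub_codedHypograph (hb.evLE ho' hmax (le_max_right o o'))⟩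

lemma exists_pseudoInter {lam : Ordinal.{0}} {b : ∀ o : Ordinal, o < lam → ℕ → ℕ}
    (hb : EvStrictAnti b) (hlim : Order.IsSuccLimit lam) (hlam : lam.card < pNum)
    {A : Set (ℕ → ℕ)} (hA : Cardinal.mk A < dStar)
    (hgap : ∀ f ∈ A, ∀ o (ho : o < lam), EvLT f (b o ho)) :
    ∃ x : Set ℕ, (∀ o (ho : o < lam), ASub x (codedHypograph (b o ho))) ∧
      ∀ f ∈ A, (x ∩ codedEpigraph f).Infinite := by
  obtain ⟨x, hxb, hxA⟩ := exists_pseudoInter_of_mk_lt_dStar (H := codedEpigraph '' A)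
    (by rintro _ ⟨f, -, rfl⟩; exact codedEpigraph_infinite f)
    (Cardinal.mk_image_le.trans_lt hA) (hb.isFilterBase_hypographs hlim)
    ((mk_hypographs_le lam b).trans_lt hlam) (by
      rintro _ ⟨⟨o, ho⟩, rfl⟩ _ ⟨f, hf, rfl⟩
      exact codedHypograph_inter_codedEpigraph_infinite
        (hb.eventually_add_one_lt hlim (hgap f hf) ho).frequently)
  exact ⟨x, fun o ho => hxb _ ⟨⟨o, ho⟩, rfl⟩, fun f hf => hxA _ ⟨f, hf, rfl⟩⟩

lemma exists_ultrafilter_of_infinite_between (hb : EvStrictAnti b) (hlam : 0 < lam)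
    {A : Set (ℕ → ℕ)} (hfiltered : ∀ f ∈ A, ∀ g ∈ A, ∃ k ∈ A, EvLE f k ∧ EvLE g k)
    (hne : A.Nonempty) {h : ℕ → ℕ}
    (hbetween : ∀ f ∈ A, ∀ o (ho : o < lam), {n | f n < h n ∧ h n < b o ho n}.Infinite) :
    ∃ 𝒰 : Ultrafilter ℕ, (𝒰 : Filter ℕ) ≤ cofinite ∧ (∀ f ∈ A, {n | f n < h n} ∈ 𝒰) ∧
      ∀ o (ho : o < lam), {n | h n < b o ho n} ∈ 𝒰 := by
  set F : Set (Set ℕ) :=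
    {s | ∃ f ∈ A, ∃ o, ∃ ho : o < lam, s = {n | f n < h n ∧ h n < b o ho n}}
  have hF : IsFilterBase F := by
    obtain ⟨f₀, hf₀⟩ := hne
    refine isFilterBase_of_directed ⟨_, f₀, hf₀, 0, hlam, rfl⟩ ?_ ?_
    · rintro _ ⟨f, hf, o, ho, rfl⟩
      exact hbetween f hf o ho
    · rintro _ ⟨f, hf, o, ho, rfl⟩ _ ⟨f', hf', o', ho', rfl⟩
      obtain ⟨k, hk, hfk, hf'k⟩ := hfiltered f hf f' hf'
      have hmax : max o o' < lam := max_lt ho ho'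
      refine ⟨_, ⟨k, hk, _, hmax, rfl⟩, ?_, ?_⟩ <;> refine aSub_iff_eventually.mpr ?_
      · filter_upwards [hfk, hb.evLE ho hmax (le_max_left o o')] with n h₁ h₂ hn
        exact ⟨h₁.trans_lt hn.1, hn.2.trans_le h₂⟩
      · filter_upwards [hf'k, hb.evLE ho' hmax (le_max_right o o')] with n h₁ h₂ hn
        exact ⟨h₁.trans_lt hn.1, hn.2.trans_le h₂⟩
  obtain ⟨𝒰, h𝒰, hF𝒰⟩ := exists_ultrafilter_le_cofinite_of_isFilterBase hF
  obtain ⟨f₀, hf₀⟩ := hne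
  exact ⟨𝒰, h𝒰, fun f hf => mem_of_superset (hF𝒰 _ ⟨f, hf, 0, hlam, rfl⟩) fun _ hn => hn.1,
    fun o ho => mem_of_superset (hF𝒰 _ ⟨f₀, hf₀, o, ho, rfl⟩) fun _ hn => hn.2⟩

end EvStrictAnti

/-- For `τ` a filtered order-type of cardinality < 𝔡* (here: a ≤*-directed family
`A` with `|A| < 𝔡*`) and `λ < 𝔭` a limit ordinal, there is no universal
`(τ, λ*)`-gap for ultrapowers of ℕ^ℕ: any such pregap `(A, B)` is interpolated in
`ℕ^ℕ/𝒰` for some nonprincipal ultrafilter `𝒰`. -/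
theorem stmt18 (A : Set (ℕ → ℕ)) (hA : Cardinal.mk A < dStar)
    (hfiltered : ∀ f ∈ A, ∀ g ∈ A, ∃ k ∈ A, EvLE f k ∧ EvLE g k)
    (lam : Ordinal) (hlim : Order.IsSuccLimit lam) (hlam : lam.card < pNum)
    (b : ∀ o : Ordinal, o < lam → ℕ → ℕ)
    (hb : ∀ o o' (ho : o < lam) (ho' : o' < lam), o < o' → EvLT (b o' ho') (b o ho))
    (hgap : ∀ f ∈ A, ∀ o (ho : o < lam), EvLT f (b o ho)) :
    ∃ (h : ℕ → ℕ) (𝒰 : Ultrafilter ℕ), (∀ n : ℕ, {n} ∉ 𝒰) ∧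
      (∀ f ∈ A, {n | f n < h n} ∈ 𝒰) ∧
      (∀ o (ho : o < lam), {n | h n < b o ho n} ∈ 𝒰) := by
  have hb : EvStrictAnti b := hb
  rcases A.eq_empty_or_nonempty with rfl | hne
  · have h𝒰 := Ultrafilter.of_le (cofinite : Filter ℕ)
    refine ⟨0, Ultrafilter.of cofinite, singleton_notMem_of_le_cofinite h𝒰, by simp,
      fun o ho => h𝒰 ?_⟩
    rw [Nat.cofinite_eq_atTop]
    exact hb.eventually_pos hlim ho
  obtain ⟨x, hxb, hxA⟩ := hb.exists_pseudoInter hlim hlam hA hgap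
  have hcol := column_finite_of_aSub (hxb 0 hlim.pos)
  obtain ⟨𝒰, h𝒰, hA𝒰, hb𝒰⟩ := hb.exists_ultrafilter_of_infinite_between hlim.pos hfiltered hne
    fun f hf o ho => (aSub_setOf_lt_columnSup (hxb o ho) f).infinite
      (infinite_setOf_lt_columnSup hcol (hxA f hf))
  exact ⟨columnSup x, 𝒰, singleton_notMem_of_le_cofinite h𝒰, hA𝒰, hb𝒰⟩
end

section
/- If 𝔭 < 𝔡*, then every filter-base of cardinality 𝔭 of infinite subsets of ℕ can be refined to a tower: there is a ⊇*-well-ordered family (t_α)_{α<𝔭} with each t_α ⊆ x_α and t_α ∩ x_ξ infinite for all ξ < 𝔭, where (x_α)_{α<𝔭} enumerates the filter-base. -/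
/-!
Recursion along the well-order `𝔭.ord.ToType`. At stage `i` the earlier members form a
⊆*-decreasing chain of fewer than `𝔭` infinite sets, hence a filter base of size `< 𝔭`, and each
of them meets every finite intersection of the `x_j`. There are at most `𝔭 < 𝔡*` such finite
intersections (`𝔭` is infinite: a finite filter base has its intersection as a pseudo-intersection),
so the definition of `𝔡*` yields a pseudo-intersection `y` of the chain that still meets all of
them. The finite intersections are closed under `x_i ∩ ·`, so `y ∩ x_i` keeps this invariant and
is the next member of the tower.
-/

open Set

open scoped Cardinal

namespace ASub

variable {a b : Set ℕ}

theorem refl (a : Set ℕ) : ASub a a := by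
  simp [ASub]

theorem mono_left {a' : Set ℕ} (h : a' ⊆ a) (hab : ASub a b) : ASub a' b :=
  hab.subset (sdiff_subset_sdiff_left h)

theorem infinite_s19 (hab : ASub a b) (ha : a.Infinite) : b.Infinite :=
  (ha.sdiff hab).mono fun _ hn => not_not.1 fun hb => hn.2 ⟨hn.1, hb⟩

theorem biInter {β : Type*} {S : Finset β} {f : β → Set ℕ} (h : ∀ j ∈ S, ASub a (f j)) :
    ASub a (⋂ j ∈ S, f j) := by
  refine (S.finite_toSet.biUnion h).subset fun n hn => ?_
  simp only [mem_sdiff, mem_iInter, not_forall] at hn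
  obtain ⟨ha, j, hj, hn⟩ := hn
  exact mem_biUnion hj ⟨ha, hn⟩

end ASub

theorem isFilterBase_range_of_asub_antitone {κ : Type*} [LinearOrder κ] {t : κ → Set ℕ}
    (hinf : ∀ j, (t j).Infinite) (ht : ∀ j k, j ≤ k → ASub (t k) (t j)) :
    IsFilterBase (range t) := by
  classical
  refine ⟨forall_mem_range.2 hinf, fun G hG => ?_⟩
  rw [← image_univ, Finset.subset_set_image_iff] at hG
  obtain ⟨S, -, rfl⟩ := hG
  rw [Finset.set_biInter_finset_image]
  rcases S.eq_empty_or_nonempty with rfl | hS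
  · simpa using infinite_univ
  · exact (ASub.biInter fun j hj => ht j (S.max' hS) (S.le_max' j hj)).infinite_s19 (hinf _)

theorem IsFilterBase.hasPseudoInter_of_finite {F : Set (Set ℕ)} (hF : IsFilterBase F)
    (hfin : F.Finite) : HasPseudoInter F :=
  ⟨⋂ a ∈ hfin.toFinset, a, hF.2 _ (by simp), fun a ha => by
    rw [ASub, sdiff_eq_empty.2 (iInter₂_subset a (hfin.mem_toFinset.2 ha))]
    exact finite_empty⟩

theorem aleph0_le_pNum (h : pNum ≠ 0) : ℵ₀ ≤ pNum := by
  have hmem : pNum ∈ {c | ∃ F : Set (Set ℕ), IsFilterBase F ∧ ¬ HasPseudoInter F ∧ c = #F} :=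
    csInf_mem (nonempty_iff_ne_empty.2 fun he => h (by rw [pNum, he, Cardinal.sInf_empty]))
  obtain ⟨F, hF, hno, hpF⟩ := hmem
  rw [hpF]
  exact not_lt.1 fun hlt =>
    hno (hF.hasPseudoInter_of_finite (Cardinal.lt_aleph0_iff_set_finite.1 hlt))

theorem Cardinal.mk_finset_le_of_le {α : Type*} {c : Cardinal} (h : #α ≤ c) (hc : ℵ₀ ≤ c) :
    #(Finset α) ≤ c := by
  cases finite_or_infinite α
  · exact (Cardinal.lt_aleph0_of_finite _).le.trans hc
  · rwa [Cardinal.mk_finset_of_infinite]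

theorem exists_asub_forall_inter_infinite {F H : Set (Set ℕ)} (hpd : pNum < dStar)
    (hF : IsFilterBase F) (hFp : #F < pNum) (hH : ∀ h ∈ H, h.Infinite) (hHp : #H ≤ pNum)
    (hFH : ∀ a ∈ F, ∀ h ∈ H, (a ∩ h).Infinite) :
    ∃ y, (∀ a ∈ F, ASub y a) ∧ ∀ h ∈ H, (y ∩ h).Infinite := by
  by_contra hno
  have hdH : dStar ≤ #H := csInf_le' ⟨H, hH, ⟨F, hF, hFp, hFH, hno⟩, rfl⟩
  exact (hpd.trans_le (hdH.trans hHp)).false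

section Tower

variable {ι : Type} (x : ι → Set ℕ)

def finiteInters : Set (Set ℕ) :=
  range fun S : Finset ι => ⋂ i ∈ S, x i

variable {x}

theorem univ_mem_finiteInters : univ ∈ finiteInters x :=
  ⟨∅, by simp⟩

theorem mem_finiteInters (i : ι) : x i ∈ finiteInters x :=
  ⟨{i}, by simp⟩

theorem inter_mem_finiteInters [DecidableEq ι] (i : ι) {h : Set ℕ} (hh : h ∈ finiteInters x) :
    x i ∩ h ∈ finiteInters x := by
  obtain ⟨S, rfl⟩ := hh
  exact ⟨insert i S, Finset.set_biInter_insert _ _ _⟩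

theorem mk_finiteInters_le {c : Cardinal} (hι : #ι ≤ c) (hc : ℵ₀ ≤ c) : #(finiteInters x) ≤ c :=
  Cardinal.mk_range_le.trans (Cardinal.mk_finset_le_of_le hι hc)

variable [LinearOrder ι] (x)

def IsNextInTower (i : ι) (t : ∀ j, j < i → Set ℕ) (s : Set ℕ) : Prop :=
  s ⊆ x i ∧ (∀ j hj, ASub s (t j hj)) ∧ ∀ h ∈ finiteInters x, (s ∩ h).Infinite

variable [WellFoundedLT ι]

noncomputable def tower : ι → Set ℕ :=
  WellFoundedLT.fix fun i t => Classical.epsilon (IsNextInTower x i t)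

theorem tower_eq (i : ι) :
    tower x i = Classical.epsilon (IsNextInTower x i fun j _ => tower x j) :=
  WellFoundedLT.fix_eq _ i

variable {x}

theorem tower_spec (hpd : pNum < dStar) (hι : ∀ i : ι, #(Iio i) < pNum) (hιp : #ι ≤ pNum)
    (hx : ∀ S : Finset ι, (⋂ i ∈ S, x i).Infinite) (i : ι) :
    IsNextInTower x i (fun j _ => tower x j) (tower x i) := by
  classical
  induction i using WellFoundedLT.induction with
  | _ i ih =>
  rw [tower_eq]
  refine Classical.epsilon_spec ?_
  have hinf : ∀ j : Iio i, (tower x j).Infinite := fun j => by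
    simpa using (ih j j.2).2.2 univ univ_mem_finiteInters
  have hanti : ∀ j k : Iio i, j ≤ k → ASub (tower x k) (tower x j) := fun j k hjk =>
    hjk.eq_or_lt.elim (fun h => h ▸ ASub.refl _) fun h => (ih k k.2).2.1 j h
  obtain ⟨y, hyC, hyH⟩ := exists_asub_forall_inter_infinite (H := finiteInters x) hpd
    (isFilterBase_range_of_asub_antitone hinf hanti) (Cardinal.mk_range_le.trans_lt (hι i))
    (by rintro _ ⟨S, rfl⟩; exact hx S)
    (mk_finiteInters_le hιp (aleph0_le_pNum (zero_le.trans_lt (hι i)).ne'))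
    (by rintro _ ⟨j, rfl⟩ h hh; exact (ih j j.2).2.2 h hh)
  refine ⟨y ∩ x i, inter_subset_right, fun j hj => (hyC _ ⟨⟨j, hj⟩, rfl⟩).mono_left
    inter_subset_left, fun h hh => ?_⟩
  rw [inter_assoc]
  exact hyH _ (inter_mem_finiteInters i hh)

theorem exists_tower_refinement (hpd : pNum < dStar) (hι : ∀ i : ι, #(Iio i) < pNum)
    (hιp : #ι ≤ pNum) (x : ι → Set ℕ) (hx : ∀ S : Finset ι, (⋂ i ∈ S, x i).Infinite) :
    ∃ t : ι → Set ℕ, (∀ i j, i ≤ j → ASub (t j) (t i)) ∧ (∀ i, (t i).Infinite ∧ t i ⊆ x i) ∧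
      ∀ i j, (t i ∩ x j).Infinite := by
  have h := tower_spec hpd hι hιp hx
  refine ⟨tower x, fun i j hij => ?_, fun i => ⟨?_, (h i).1⟩, fun i j =>
    (h i).2.2 _ (mem_finiteInters j)⟩
  · exact hij.eq_or_lt.elim (fun h => h ▸ ASub.refl _) fun hij => (h j).2.1 i hij
  · simpa using (h i).2.2 univ univ_mem_finiteInters

end Tower

theorem stmt19_general (hpd : pNum < dStar)
    (x : ∀ o : Ordinal, o < pNum.ord → Set ℕ)
    (hfip : ∀ F : Finset Ordinal, (∀ o ∈ F, o < pNum.ord) →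
      (⋂ o ∈ F, ⋂ (ho : o < pNum.ord), x o ho).Infinite) :
    ∃ t : ∀ o : Ordinal, o < pNum.ord → Set ℕ,
      (∀ o o' (ho : o < pNum.ord) (ho' : o' < pNum.ord), o ≤ o' →
        ASub (t o' ho') (t o ho)) ∧
      (∀ o (ho : o < pNum.ord), (t o ho).Infinite ∧ t o ho ⊆ x o ho) ∧
      (∀ o (ho : o < pNum.ord), ∀ ξ (hξ : ξ < pNum.ord),
        (t o ho ∩ x ξ hξ).Infinite) := by
  let e : Iio pNum.ord ≃o pNum.ord.ToType := Ordinal.ToType.mk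
  have hx (S : Finset pNum.ord.ToType) : (⋂ i ∈ S, x (e.symm i) (e.symm i).2).Infinite := by
    refine (hfip (S.image fun i => (e.symm i : Ordinal))
      (Finset.forall_mem_image.2 fun i _ => (e.symm i).2)).mono fun n hn => ?_
    simp only [mem_iInter, Finset.mem_image] at hn ⊢
    exact fun i hi => hn _ ⟨i, hi, rfl⟩ _
  obtain ⟨t, hanti, hsub, hmeet⟩ := exists_tower_refinement hpd
    (fun i => by simpa using Cardinal.mk_Iio_lt i) (Cardinal.mk_ord_toType pNum).le _ hx
  refine ⟨fun o ho => t (e ⟨o, ho⟩), fun o o' ho ho' hoo' => hanti _ _ (e.monotone hoo'),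
    fun o ho => ?_, fun o ho ξ hξ => ?_⟩
  · have h := hsub (e ⟨o, ho⟩)
    rwa [e.symm_apply_apply] at h
  · have h := hmeet (e ⟨o, ho⟩) (e ⟨ξ, hξ⟩)
    rwa [e.symm_apply_apply] at h

/-- If 𝔭 < 𝔡*, then every filter-base `(x_α)_{α<𝔭}` of cardinality 𝔭 can be
refined to a tower: there is a ⊇*-well-ordered (i.e. ⊆*-decreasing along the
enumeration) family `(t_α)_{α<𝔭}` of infinite sets with `t_α ⊆ x_α` and
`t_α ∩ x_ξ` infinite for all `ξ < 𝔭`. -/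
theorem stmt19 (hpd : pNum < dStar)
    (x : ∀ o : Ordinal, o < pNum.ord → Set ℕ)
    (hinf : ∀ o (ho : o < pNum.ord), (x o ho).Infinite)
    (hfip : ∀ F : Finset Ordinal, (∀ o ∈ F, o < pNum.ord) →
      (⋂ o ∈ F, ⋂ (ho : o < pNum.ord), x o ho).Infinite) :
    ∃ t : ∀ o : Ordinal, o < pNum.ord → Set ℕ,
      (∀ o o' (ho : o < pNum.ord) (ho' : o' < pNum.ord), o ≤ o' →
        ASub (t o' ho') (t o ho)) ∧
      (∀ o (ho : o < pNum.ord), (t o ho).Infinite ∧ t o ho ⊆ x o ho) ∧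
      (∀ o (ho : o < pNum.ord), ∀ ξ (hξ : ξ < pNum.ord),
        (t o ho ∩ x ξ hξ).Infinite) :=
  stmt19_general hpd x hfip
end
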